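/- Let A and A' be Schur rings over finite groups G and G', φ: A → A' an algebraic isomorphism, ξ ∈ ℤG, ξ' ∈ ℤG'. Let B be the smallest Schur ring over G containing A and ξ, and B' the smallest Schur ring over G' containing A' and ξ'. Then there is at most one algebraic isomorphism ψ: B → B' extending φ with ξ^ψ = ξ'. -/

import Mathlib

open scoped BigOperators

/-- The indicator element `X̲ = Σ_{x∈X} x` of a finset in the integral group ring `ℤG`. -/
noncomputable def grpInd {G : Type*} [Group G] (X : Finset G) : MonoidAlgebra ℤ G :=
  ∑ x ∈ X, MonoidAlgebra.single x (1 : ℤ)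

/-- A Schur ring over a finite group `G`: a partition of `G` containing `{1}`,
closed under inverses, whose indicator elements span a subring of `ℤG`. -/
structure SchurRing (G : Type*) [Group G] [Fintype G] [DecidableEq G] where
  parts : Finset (Finset G)
  nonempty_mem : ∀ X ∈ parts, X.Nonempty
  cover : ∀ g : G, ∃ X ∈ parts, g ∈ X
  pairwise_disjoint : ∀ X ∈ parts, ∀ Y ∈ parts, X ≠ Y → Disjoint X Y
  one_mem : ({1} : Finset G) ∈ parts
  inv_mem : ∀ X ∈ parts, X.image (·⁻¹) ∈ parts
  mul_mem : ∀ X ∈ parts, ∀ Y ∈ parts, ∃ c : Finset G → ℤ,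
    grpInd X * grpInd Y = ∑ Z ∈ parts, c Z • grpInd Z

namespace SchurRing

variable {G : Type*} [Group G] [Fintype G] [DecidableEq G]

/-- The underlying `ℤ`-module of the Schur ring: the span of the indicators of basic sets. -/
noncomputable def carrier (A : SchurRing G) : Submodule ℤ (MonoidAlgebra ℤ G) :=
  Submodule.span ℤ {v | ∃ X ∈ A.parts, v = grpInd X}

/-- `X ⊆ G` is an `A`-set if its indicator lies in `A`. -/
def IsASet (A : SchurRing G) (X : Finset G) : Prop := grpInd X ∈ A.carrier

/-- `A` is a subring of `B` (as S-rings over the same group). -/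
def le (A B : SchurRing G) : Prop := ∀ X ∈ A.parts, grpInd X ∈ B.carrier

end SchurRing

/-- An algebraic isomorphism of Schur rings: a bijection of basic sets preserving all
structure constants (the structure constant `c^Z_{X,Y}` is the coefficient of the
product `X̲·Y̲` at any `z ∈ Z`). -/
def IsAlgIso {G G' : Type*} [Group G] [Fintype G] [DecidableEq G]
    [Group G'] [Fintype G'] [DecidableEq G']
    (A : SchurRing G) (A' : SchurRing G') (φ : Finset G → Finset G') : Prop :=
  Set.BijOn φ ↑A.parts ↑A'.parts ∧
  ∀ X ∈ A.parts, ∀ Y ∈ A.parts, ∀ Z ∈ A.parts, ∀ z ∈ Z, ∀ z' ∈ φ Z,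
    (grpInd X * grpInd Y).coeff z = (grpInd (φ X) * grpInd (φ Y)).coeff z'

/-- A combinatorial isomorphism of Schur rings: a bijection `G → G'` mapping basic sets to
basic sets and inducing a Cayley graph isomorphism on each basic set. -/
def IsCombIso {G G' : Type*} [Group G] [Fintype G] [DecidableEq G]
    [Group G'] [Fintype G'] [DecidableEq G']
    (A : SchurRing G) (A' : SchurRing G') (f : G → G') : Prop :=
  Function.Bijective f ∧
  ∀ X ∈ A.parts, X.image f ∈ A'.parts ∧
    ∀ g h : G, h * g⁻¹ ∈ X ↔ f h * (f g)⁻¹ ∈ X.image f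

/-- An automorphism of a Schur ring: a permutation of `G` preserving the edge set of
`Cay(G,X)` for every basic set `X`. -/
def IsSchurAut {G : Type*} [Group G] [Fintype G] [DecidableEq G]
    (A : SchurRing G) (f : G → G) : Prop :=
  Function.Bijective f ∧ ∀ X ∈ A.parts, ∀ g h : G, h * g⁻¹ ∈ X ↔ f h * (f g)⁻¹ ∈ X

/-- Separability with respect to the class of (finite) abelian groups. -/
def SchurRing.IsSeparableAbelian {G : Type} [Group G] [Fintype G] [DecidableEq G]
    (A : SchurRing G) : Prop :=
  ∀ (G' : Type) [CommGroup G'] [Fintype G'] [DecidableEq G'],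
    ∀ (A' : SchurRing G') (φ : Finset G → Finset G'),
    IsAlgIso A A' φ →
    ∃ f : G → G', IsCombIso A A' f ∧ ∀ X ∈ A.parts, φ X = X.image f

/-! If `ψ₁` and `ψ₂` both extend `φ` and send `ξ` to `ξ'`, then `τ = ψ₂⁻¹ ∘ ψ₁` is an algebraic
automorphism of `B` that permutes the basic sets of `B` inside each basic set of `A` and
preserves the coefficients of `ξ`. Since `τ` preserves the structure constants of `B`, merging
the basic sets of `B` along the `τ`-orbits yields an S-ring. It contains `A` and `ξ`, hence `B` by minimality, so every basic set of `B`
is a whole `τ`-orbit: `τ` is the identity and `ψ₁ = ψ₂`. -/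

open scoped Pointwise
open Finset

section GroupRing

variable {G : Type*} [Group G]

lemma grpInd_singleton_one : grpInd ({1} : Finset G) = 1 := by
  simp [grpInd, MonoidAlgebra.one_def]

variable [DecidableEq G]

lemma coeff_grpInd (X : Finset G) (g : G) :
    (grpInd X).coeff g = if g ∈ X then 1 else 0 := by
  simp [grpInd, MonoidAlgebra.coeff_sum, Finsupp.single_apply]

lemma grpInd_injective : Function.Injective (grpInd : Finset G → MonoidAlgebra ℤ G) := by
  intro X Y h
  ext g
  have := congrArg (fun v => v.coeff g) h
  simp only [coeff_grpInd] at this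
  split_ifs at this <;> simp_all

lemma coeff_grpInd_mul_grpInd (X Y : Finset G) (g : G) :
    (grpInd X * grpInd Y).coeff g = #{a ∈ X | a⁻¹ * g ∈ Y} := by
  simp [grpInd, Finset.sum_mul, MonoidAlgebra.coeff_sum, Finsupp.single_apply]

lemma grpInd_biUnion (S : Finset (Finset G))
    (hS : (S : Set (Finset G)).PairwiseDisjoint id) :
    grpInd (S.biUnion id) = ∑ X ∈ S, grpInd X :=
  Finset.sum_biUnion hS

lemma exists_eq_sum_smul_grpInd {P : Finset (Finset G)}
    (hcover : ∀ g, ∃ X ∈ P, g ∈ X) (hdisj : (P : Set (Finset G)).PairwiseDisjoint id)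
    {v : MonoidAlgebra ℤ G} (hv : ∀ X ∈ P, ∀ x ∈ X, ∀ y ∈ X, v.coeff x = v.coeff y) :
    ∃ c : Finset G → ℤ, v = ∑ X ∈ P, c X • grpInd X := by
  refine ⟨fun X => if h : X.Nonempty then v.coeff h.choose else 0, ?_⟩
  ext g
  obtain ⟨X₀, hX₀, hg⟩ := hcover g
  have hne : X₀.Nonempty := ⟨g, hg⟩
  rw [MonoidAlgebra.coeff_sum, Finsupp.finsetSum_apply, Finset.sum_eq_single X₀]
  · simp only [MonoidAlgebra.coeff_smul_apply, coeff_grpInd, if_pos hg, dif_pos hne, smul_eq_mul,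
      mul_one]
    exact hv X₀ hX₀ g hg _ hne.choose_spec
  · intro X hX hXX₀
    have hgX : g ∉ X := fun hgX => Finset.disjoint_left.mp (hdisj hX hX₀ hXX₀) hgX hg
    simp only [MonoidAlgebra.coeff_smul_apply, coeff_grpInd, if_neg hgX, smul_zero]
  · exact fun h => absurd hX₀ h

end GroupRing

namespace SchurRing

variable {G : Type*} [Group G] [Fintype G] [DecidableEq G] (B : SchurRing G)

lemma eq_of_mem_of_mem {X Y : Finset G} (hX : X ∈ B.parts) (hY : Y ∈ B.parts) {g : G}
    (hgX : g ∈ X) (hgY : g ∈ Y) : X = Y :=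
  by_contra fun h => Finset.disjoint_left.mp (B.pairwise_disjoint X hX Y hY h) hgX hgY

lemma pairwiseDisjoint_parts : (B.parts : Set (Finset G)).PairwiseDisjoint id :=
  fun X hX Y hY => B.pairwise_disjoint X hX Y hY

lemma coeff_grpInd_of_mem {X Y : Finset G} (hX : X ∈ B.parts) (hY : Y ∈ B.parts) {y : G}
    (hy : y ∈ Y) : (grpInd X).coeff y = if X = Y then 1 else 0 := by
  rw [coeff_grpInd]
  exact if_congr ⟨fun hyX => B.eq_of_mem_of_mem hX hY hyX hy, fun h => h ▸ hy⟩ rfl rfl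

lemma sum_smul_grpInd_mem_carrier (c : Finset G → ℤ) :
    ∑ X ∈ B.parts, c X • grpInd X ∈ B.carrier :=
  Submodule.sum_mem _ fun X hX => Submodule.smul_mem _ _ (Submodule.subset_span ⟨X, hX, rfl⟩)

lemma mem_carrier_iff {v : MonoidAlgebra ℤ G} :
    v ∈ B.carrier ↔ ∀ X ∈ B.parts, ∀ x ∈ X, ∀ y ∈ X, v.coeff x = v.coeff y := by
  refine ⟨fun hv => ?_, fun hv => ?_⟩
  · induction hv using Submodule.span_induction with
    | mem w hw =>
      obtain ⟨Y, hY, rfl⟩ := hw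
      intro X hX x hx y hy
      rw [B.coeff_grpInd_of_mem hY hX hx, B.coeff_grpInd_of_mem hY hX hy]
    | zero => simp
    | add v w _ _ hv hw =>
      intro X hX x hx y hy
      simp [hv X hX x hx y hy, hw X hX x hx y hy]
    | smul a v _ hv =>
      intro X hX x hx y hy
      rw [MonoidAlgebra.coeff_smul_apply, MonoidAlgebra.coeff_smul_apply, hv X hX x hx y hy]
  · obtain ⟨c, rfl⟩ := exists_eq_sum_smul_grpInd B.cover B.pairwiseDisjoint_parts hv
    exact B.sum_smul_grpInd_mem_carrier c

lemma grpInd_mul_grpInd_mem_carrier {X Y : Finset G} (hX : X ∈ B.parts) (hY : Y ∈ B.parts) :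
    grpInd X * grpInd Y ∈ B.carrier := by
  obtain ⟨c, hc⟩ := B.mul_mem X hX Y hY
  exact hc ▸ B.sum_smul_grpInd_mem_carrier c

lemma mem_iff_subset_of_grpInd_mem {X V : Finset G} (hX : grpInd X ∈ B.carrier)
    (hV : V ∈ B.parts) {x : G} (hx : x ∈ V) : x ∈ X ↔ V ⊆ X := by
  refine ⟨fun hxX w hw => ?_, fun hVX => hVX hx⟩
  have := (B.mem_carrier_iff.mp hX) V hV x hx w hw
  simp only [coeff_grpInd, if_pos hxX] at this
  by_contra hwX
  simp [hwX] at this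

end SchurRing

namespace IsAlgIso

section

variable {G G' : Type*} [Group G] [Fintype G] [DecidableEq G]
  [Group G'] [Fintype G'] [DecidableEq G']
  {B : SchurRing G} {B' : SchurRing G'} {ψ : Finset G → Finset G'}

lemma mem_parts (h : IsAlgIso B B' ψ) {Z : Finset G} (hZ : Z ∈ B.parts) : ψ Z ∈ B'.parts :=
  h.1.mapsTo hZ

lemma coeff_grpInd_apply (h : IsAlgIso B B' ψ) {Y Z : Finset G} (hY : Y ∈ B.parts)
    (hZ : Z ∈ B.parts) {z : G} (hz : z ∈ Z) {z' : G'} (hz' : z' ∈ ψ Z) :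
    (grpInd (ψ Y)).coeff z' = (grpInd Y).coeff z := by
  rw [B'.coeff_grpInd_of_mem (h.mem_parts hY) (h.mem_parts hZ) hz',
    B.coeff_grpInd_of_mem hY hZ hz]
  exact if_congr (h.1.injOn.eq_iff hY hZ) rfl rfl

lemma coeff_sum_grpInd_apply (h : IsAlgIso B B' ψ) {S : Finset (Finset G)} (hS : S ⊆ B.parts)
    {V : Finset G} (hV : V ∈ B.parts) {z' : G'} (hz' : z' ∈ ψ V) :
    (∑ Z ∈ S, grpInd (ψ Z)).coeff z' = if V ∈ S then 1 else 0 := by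
  obtain ⟨z, hz⟩ := B.nonempty_mem V hV
  rw [MonoidAlgebra.coeff_sum, Finsupp.finsetSum_apply, ← Finset.sum_ite_eq' S V (fun _ => 1)]
  refine Finset.sum_congr rfl fun Z hZ => ?_
  rw [h.coeff_grpInd_apply (hS hZ) hV hz hz', B.coeff_grpInd_of_mem (hS hZ) hV hz]

lemma map_one (h : IsAlgIso B B' ψ) : ψ {1} = {1} := by
  obtain ⟨U, hU, hU1⟩ := h.1.surjOn B'.one_mem
  have hunit : ∀ Y ∈ B.parts, grpInd (ψ {1}) * grpInd (ψ Y) = grpInd (ψ Y) := by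
    intro Y hY
    ext z'
    obtain ⟨W', hW', hz'⟩ := B'.cover z'
    obtain ⟨Z, hZ, rfl⟩ := h.1.surjOn hW'
    obtain ⟨z, hz⟩ := B.nonempty_mem Z hZ
    rw [← h.2 _ B.one_mem _ hY _ hZ z hz z' hz', grpInd_singleton_one, one_mul,
      h.coeff_grpInd_apply hY hZ hz hz']
  apply grpInd_injective
  simpa [hU1, grpInd_singleton_one] using hunit U hU

lemma map_inv (h : IsAlgIso B B' ψ) {Z : Finset G} (hZ : Z ∈ B.parts) : ψ Z⁻¹ = (ψ Z)⁻¹ := by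
  have hZinv : Z⁻¹ ∈ B.parts := B.inv_mem Z hZ
  have h1 : (1 : G') ∈ ψ {1} := by rw [h.map_one]; exact mem_singleton_self 1
  -- `1` occurs in `grpInd Z * grpInd Z⁻¹`, hence in `grpInd (ψ Z) * grpInd (ψ Z⁻¹)`.
  have hcoeff := h.2 Z hZ Z⁻¹ hZinv {1} B.one_mem 1 (mem_singleton_self 1) 1 h1
  rw [coeff_grpInd_mul_grpInd, coeff_grpInd_mul_grpInd, Nat.cast_inj] at hcoeff
  obtain ⟨a, ha⟩ := B.nonempty_mem Z hZ
  have hpos : 0 < #{a ∈ ψ Z | a⁻¹ * 1 ∈ ψ Z⁻¹} :=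
    hcoeff ▸ Finset.card_pos.mpr ⟨a, by simpa using inv_mem_inv ha⟩
  obtain ⟨b, hb⟩ := Finset.card_pos.mp hpos
  rw [mem_filter, mul_one] at hb
  exact B'.eq_of_mem_of_mem (h.mem_parts hZinv) (B'.inv_mem _ (h.mem_parts hZ)) hb.2
    (inv_mem_inv hb.1)

lemma of_comp_eq {ψ₁ ψ₂ : Finset G → Finset G'} (h₁ : IsAlgIso B B' ψ₁)
    (h₂ : IsAlgIso B B' ψ₂) {τ : Finset G → Finset G} (hτ : Set.MapsTo τ B.parts B.parts)
    (hcomp : ∀ Z ∈ B.parts, ψ₂ (τ Z) = ψ₁ Z) : IsAlgIso B B τ := by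
  refine ⟨⟨hτ, fun X hX Y hY hXY => h₁.1.injOn hX hY ?_, fun W hW => ?_⟩,
    fun X hX Y hY Z hZ z hz y hy => ?_⟩
  · rw [← hcomp X hX, ← hcomp Y hY, hXY]
  · obtain ⟨Z, hZ, hZW⟩ := h₁.1.surjOn (h₂.mem_parts hW)
    exact ⟨Z, hZ, h₂.1.injOn (hτ hZ) hW (by rw [hcomp Z hZ, hZW])⟩
  · obtain ⟨z', hz'⟩ := B'.nonempty_mem _ (h₁.mem_parts hZ)
    rw [h₁.2 X hX Y hY Z hZ z hz z' hz', ← hcomp X hX, ← hcomp Y hY,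
      h₂.2 _ (hτ hX) _ (hτ hY) _ (hτ hZ) y hy z' (by rwa [hcomp Z hZ])]

lemma subset_iff_subset_of_sum_eq {ψ₁ ψ₂ : Finset G → Finset G'} (h₁ : IsAlgIso B B' ψ₁)
    (h₂ : IsAlgIso B B' ψ₂) {X : Finset G}
    (hX : ∑ Z ∈ B.parts with Z ⊆ X, grpInd (ψ₁ Z) = ∑ Z ∈ B.parts with Z ⊆ X, grpInd (ψ₂ Z))
    {V W : Finset G} (hV : V ∈ B.parts) (hW : W ∈ B.parts) (hVW : ψ₂ W = ψ₁ V) :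
    V ⊆ X ↔ W ⊆ X := by
  obtain ⟨z', hz'⟩ := B'.nonempty_mem _ (h₁.mem_parts hV)
  have hcoeff := congrArg (fun v => v.coeff z') hX
  simp only [h₁.coeff_sum_grpInd_apply (filter_subset _ _) hV hz',
    h₂.coeff_sum_grpInd_apply (filter_subset _ _) hW (hVW ▸ hz'), mem_filter, hV, hW,
    true_and] at hcoeff
  split_ifs at hcoeff with h h' h' <;> simp_all

lemma exists_perm_comp_eq {ψ₁ ψ₂ : Finset G → Finset G'} (h₁ : IsAlgIso B B' ψ₁)
    (h₂ : IsAlgIso B B' ψ₂) :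
    ∃ τ : Equiv.Perm (Finset G), IsAlgIso B B τ ∧ (∀ Z ∉ B.parts, τ Z = Z) ∧
      ∀ Z ∈ B.parts, ψ₂ (τ Z) = ψ₁ Z := by
  let e : Equiv.Perm (B.parts : Set (Finset G)) := (h₁.1.equiv ψ₁).trans (h₂.1.equiv ψ₂).symm
  have hmaps : Set.MapsTo (Equiv.Perm.ofSubtype e) B.parts B.parts := fun Z hZ => by
    rw [Equiv.Perm.ofSubtype_apply_of_mem e hZ]
    exact (e ⟨Z, hZ⟩).2
  have hcomp : ∀ Z ∈ B.parts, ψ₂ (Equiv.Perm.ofSubtype e Z) = ψ₁ Z := fun Z hZ => by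
    rw [Equiv.Perm.ofSubtype_apply_of_mem e hZ]
    exact congrArg Subtype.val ((h₂.1.equiv ψ₂).apply_symm_apply (h₁.1.equiv ψ₁ ⟨Z, hZ⟩))
  exact ⟨_, h₁.of_comp_eq h₂ hmaps hcomp,
    fun Z hZ => Equiv.Perm.ofSubtype_apply_of_not_mem e hZ, hcomp⟩

end

section Automorphism

variable {G : Type*} [Group G] [Fintype G] [DecidableEq G] {B : SchurRing G}
  {τ : Equiv.Perm (Finset G)}

lemma pow_apply_mem_parts (hτ : IsAlgIso B B τ) {Z : Finset G} (hZ : Z ∈ B.parts) (n : ℕ) :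
    (τ ^ n) Z ∈ B.parts := by
  induction n with
  | zero => exact hZ
  | succ n ih =>
    rw [pow_succ', Equiv.Perm.mul_apply]
    exact hτ.mem_parts ih

lemma mem_parts_of_sameCycle (hτ : IsAlgIso B B τ) {Z W : Finset G} (hZ : Z ∈ B.parts)
    (h : τ.SameCycle Z W) : W ∈ B.parts := by
  obtain ⟨n, rfl⟩ := h.exists_nat_pow_eq
  exact hτ.pow_apply_mem_parts hZ n

end Automorphism

end IsAlgIso

namespace SchurRing

variable {G : Type*} [Group G] [Fintype G] [DecidableEq G] {B : SchurRing G}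
  {τ : Equiv.Perm (Finset G)}

variable (B τ) in
def orbitUnion (Z : Finset G) : Finset G :=
  {W ∈ B.parts | τ.SameCycle Z W}.biUnion id

lemma mem_orbitUnion {Z : Finset G} {g : G} :
    g ∈ B.orbitUnion τ Z ↔ ∃ W ∈ B.parts, τ.SameCycle Z W ∧ g ∈ W := by
  simp [orbitUnion, and_assoc]

lemma mem_orbitUnion_iff_of_mem {Z V : Finset G} (hV : V ∈ B.parts) {g : G} (hg : g ∈ V) :
    g ∈ B.orbitUnion τ Z ↔ τ.SameCycle Z V := by
  refine ⟨fun h => ?_, fun h => mem_orbitUnion.mpr ⟨V, hV, h, hg⟩⟩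
  obtain ⟨W, hW, hZW, hgW⟩ := mem_orbitUnion.mp h
  exact B.eq_of_mem_of_mem hW hV hgW hg ▸ hZW

lemma subset_orbitUnion {Z : Finset G} (hZ : Z ∈ B.parts) : Z ⊆ B.orbitUnion τ Z :=
  fun _ hg => (mem_orbitUnion_iff_of_mem hZ hg).mpr (Equiv.Perm.SameCycle.refl τ Z)

lemma orbitUnion_eq_of_sameCycle {Z W : Finset G} (h : τ.SameCycle Z W) :
    B.orbitUnion τ Z = B.orbitUnion τ W := by
  ext g
  simp only [mem_orbitUnion]
  exact exists_congr fun V => and_congr_right fun _ =>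
    and_congr_left' ⟨h.symm.trans, h.trans⟩

lemma grpInd_orbitUnion (Z : Finset G) :
    grpInd (B.orbitUnion τ Z) = ∑ W ∈ B.parts with τ.SameCycle Z W, grpInd W :=
  grpInd_biUnion _ (B.pairwiseDisjoint_parts.subset (coe_subset.mpr (filter_subset _ _)))

lemma exists_mem_orbitUnion (g : G) : ∃ X ∈ B.parts.image (B.orbitUnion τ), g ∈ X := by
  obtain ⟨V, hV, hgV⟩ := B.cover g
  exact ⟨_, mem_image_of_mem _ hV, subset_orbitUnion hV hgV⟩

lemma pairwiseDisjoint_orbitUnion :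
    (B.parts.image (B.orbitUnion τ) : Set (Finset G)).PairwiseDisjoint id := by
  simp only [coe_image]
  rintro _ ⟨Z, -, rfl⟩ _ ⟨W, -, rfl⟩ hZW
  refine Finset.disjoint_left.mpr fun g hgZ hgW => hZW ?_
  obtain ⟨V, hV, hgV⟩ := B.cover g
  rw [orbitUnion_eq_of_sameCycle ((mem_orbitUnion_iff_of_mem hV hgV).mp hgZ),
    orbitUnion_eq_of_sameCycle ((mem_orbitUnion_iff_of_mem hV hgV).mp hgW)]

lemma coeff_eq_of_sameCycle (hτ : IsAlgIso B B τ) {v : MonoidAlgebra ℤ G}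
    (hv : v ∈ B.carrier) (hinv : ∀ V ∈ B.parts, ∀ x ∈ V, ∀ y ∈ τ V, v.coeff x = v.coeff y)
    {V W : Finset G} (hV : V ∈ B.parts) (hVW : τ.SameCycle V W) {x y : G} (hx : x ∈ V)
    (hy : y ∈ W) : v.coeff x = v.coeff y := by
  obtain ⟨n, rfl⟩ := hVW.exists_nat_pow_eq
  clear hVW
  induction n generalizing y with
  | zero => exact B.mem_carrier_iff.mp hv V hV x hx y hy
  | succ n ih =>
    obtain ⟨w, hw⟩ := B.nonempty_mem _ (hτ.pow_apply_mem_parts hV n)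
    rw [pow_succ', Equiv.Perm.mul_apply] at hy
    exact (ih hw).trans (hinv _ (hτ.pow_apply_mem_parts hV n) w hw y hy)

lemma coeff_eq_of_mem_orbitUnion (hτ : IsAlgIso B B τ) {v : MonoidAlgebra ℤ G}
    (hv : v ∈ B.carrier) (hinv : ∀ V ∈ B.parts, ∀ x ∈ V, ∀ y ∈ τ V, v.coeff x = v.coeff y)
    {Z : Finset G} {x y : G} (hx : x ∈ B.orbitUnion τ Z) (hy : y ∈ B.orbitUnion τ Z) :
    v.coeff x = v.coeff y := by
  obtain ⟨V, hV, hZV, hxV⟩ := mem_orbitUnion.mp hx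
  obtain ⟨W, -, hZW, hyW⟩ := mem_orbitUnion.mp hy
  exact coeff_eq_of_sameCycle hτ hv hinv hV (hZV.symm.trans hZW) hxV hyW

lemma orbitUnion_one (hτ : IsAlgIso B B τ) : B.orbitUnion τ {1} = {1} := by
  ext g
  rw [mem_orbitUnion]
  refine ⟨fun ⟨W, _, h1W, hgW⟩ => ?_, fun hg => ⟨{1}, B.one_mem, .refl τ {1}, hg⟩⟩
  rwa [← h1W.eq_of_left hτ.map_one] at hgW

lemma sameCycle_inv_inv (hτ : IsAlgIso B B τ) (hsupp : ∀ Z ∉ B.parts, τ Z = Z)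
    {Z W : Finset G} (h : τ.SameCycle Z W) : τ.SameCycle Z⁻¹ W⁻¹ := by
  have hcomm : ∀ Y : Finset G, τ Y⁻¹ = (τ Y)⁻¹ := by
    intro Y
    by_cases hY : Y ∈ B.parts
    · exact hτ.map_inv hY
    · have hYinv : Y⁻¹ ∉ B.parts := fun h => hY (inv_inv Y ▸ B.inv_mem _ h)
      rw [hsupp _ hY, hsupp _ hYinv]
  have hconj : Equiv.inv (Finset G) * τ * (Equiv.inv (Finset G))⁻¹ = τ := by
    ext1 Y
    simp [hcomm]
  rw [← hconj, Equiv.Perm.sameCycle_conj] at h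
  simpa using h

lemma orbitUnion_inv (hτ : IsAlgIso B B τ) (hsupp : ∀ Z ∉ B.parts, τ Z = Z) (Z : Finset G) :
    (B.orbitUnion τ Z)⁻¹ = B.orbitUnion τ Z⁻¹ := by
  ext g
  rw [mem_inv', mem_orbitUnion, mem_orbitUnion]
  constructor
  · rintro ⟨W, hW, hZW, hgW⟩
    exact ⟨W⁻¹, B.inv_mem W hW, sameCycle_inv_inv hτ hsupp hZW, by simpa using inv_mem_inv hgW⟩
  · rintro ⟨W, hW, hZW, hgW⟩
    refine ⟨W⁻¹, B.inv_mem W hW, ?_, inv_mem_inv hgW⟩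
    simpa using sameCycle_inv_inv hτ hsupp hZW

lemma sum_comp_perm_filter_sameCycle (hτ : IsAlgIso B B τ) {Z₀ : Finset G}
    (hZ₀ : Z₀ ∈ B.parts) (f : Finset G → ℤ) :
    ∑ W ∈ B.parts with τ.SameCycle Z₀ W, f (τ W) = ∑ W ∈ B.parts with τ.SameCycle Z₀ W, f W := by
  refine Finset.sum_equiv τ (fun W => ?_) (fun _ _ => rfl)
  simp only [mem_filter, Equiv.Perm.sameCycle_apply_right]
  exact ⟨fun h => ⟨hτ.mem_parts h.1, h.2⟩,
    fun h => ⟨hτ.mem_parts_of_sameCycle hZ₀ h.2, h.2⟩⟩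

lemma grpInd_orbitUnion_mul_mem_carrier (Z W : Finset G) :
    grpInd (B.orbitUnion τ Z) * grpInd (B.orbitUnion τ W) ∈ B.carrier := by
  rw [grpInd_orbitUnion, grpInd_orbitUnion, sum_mul_sum]
  exact Submodule.sum_mem _ fun X hX => Submodule.sum_mem _ fun Y hY =>
    B.grpInd_mul_grpInd_mem_carrier (mem_filter.mp hX).1 (mem_filter.mp hY).1

lemma coeff_grpInd_orbitUnion_mul_eq (hτ : IsAlgIso B B τ) {Z₀ W₀ : Finset G}
    (hZ₀ : Z₀ ∈ B.parts) (hW₀ : W₀ ∈ B.parts) :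
    ∀ V ∈ B.parts, ∀ x ∈ V, ∀ y ∈ τ V,
      (grpInd (B.orbitUnion τ Z₀) * grpInd (B.orbitUnion τ W₀)).coeff x =
        (grpInd (B.orbitUnion τ Z₀) * grpInd (B.orbitUnion τ W₀)).coeff y := by
  intro V hV x hx y hy
  simp only [grpInd_orbitUnion, sum_mul_sum, MonoidAlgebra.coeff_sum, Finsupp.finsetSum_apply]
  symm
  rw [← sum_comp_perm_filter_sameCycle hτ hZ₀]
  refine Finset.sum_congr rfl fun Z hZ => ?_
  rw [← sum_comp_perm_filter_sameCycle hτ hW₀]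
  exact Finset.sum_congr rfl fun W hW =>
    (hτ.2 Z (mem_filter.mp hZ).1 W (mem_filter.mp hW).1 V hV x hx y hy).symm

variable (B τ) in
def fusion (hτ : IsAlgIso B B τ) (hsupp : ∀ Z ∉ B.parts, τ Z = Z) : SchurRing G where
  parts := B.parts.image (B.orbitUnion τ)
  nonempty_mem := by
    simp only [mem_image]
    rintro _ ⟨Z, hZ, rfl⟩
    exact (B.nonempty_mem Z hZ).mono (subset_orbitUnion hZ)
  cover := exists_mem_orbitUnion
  pairwise_disjoint := pairwiseDisjoint_orbitUnion
  one_mem := orbitUnion_one hτ ▸ mem_image_of_mem _ B.one_mem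
  inv_mem := by
    simp only [mem_image]
    rintro _ ⟨Z, hZ, rfl⟩
    exact ⟨Z⁻¹, B.inv_mem Z hZ, (orbitUnion_inv hτ hsupp Z).symm⟩
  mul_mem := by
    simp only [mem_image]
    rintro _ ⟨Z, hZ, rfl⟩ _ ⟨W, hW, rfl⟩
    refine exists_eq_sum_smul_grpInd exists_mem_orbitUnion pairwiseDisjoint_orbitUnion ?_
    simp only [mem_image]
    rintro _ ⟨U, -, rfl⟩ x hx y hy
    exact coeff_eq_of_mem_orbitUnion hτ (grpInd_orbitUnion_mul_mem_carrier Z W)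
      (coeff_grpInd_orbitUnion_mul_eq hτ hZ hW) hx hy

lemma mem_fusion_carrier (hτ : IsAlgIso B B τ) (hsupp : ∀ Z ∉ B.parts, τ Z = Z)
    {v : MonoidAlgebra ℤ G} (hv : v ∈ B.carrier)
    (hinv : ∀ V ∈ B.parts, ∀ x ∈ V, ∀ y ∈ τ V, v.coeff x = v.coeff y) :
    v ∈ (B.fusion τ hτ hsupp).carrier := by
  refine (mem_carrier_iff _).mpr ?_
  simp only [fusion, mem_image]
  rintro _ ⟨Z, -, rfl⟩ x hx y hy
  exact coeff_eq_of_mem_orbitUnion hτ hv hinv hx hy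

lemma apply_eq_self_of_grpInd_mem_fusion (hτ : IsAlgIso B B τ)
    (hsupp : ∀ Z ∉ B.parts, τ Z = Z) {Z : Finset G} (hZ : Z ∈ B.parts)
    (h : grpInd Z ∈ (B.fusion τ hτ hsupp).carrier) : τ Z = Z := by
  obtain ⟨x, hx⟩ := B.nonempty_mem Z hZ
  obtain ⟨y, hy⟩ := B.nonempty_mem (τ Z) (hτ.mem_parts hZ)
  have hxy := (mem_carrier_iff _).mp h _ (mem_image_of_mem _ hZ) x (subset_orbitUnion hZ hx) y
    ((mem_orbitUnion_iff_of_mem (hτ.mem_parts hZ) hy).mpr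
      (Equiv.Perm.sameCycle_apply_right.mpr (.refl τ Z)))
  rw [coeff_grpInd, coeff_grpInd, if_pos hx] at hxy
  have hyZ : y ∈ Z := by
    by_contra hyZ
    simp [hyZ] at hxy
  exact B.eq_of_mem_of_mem (hτ.mem_parts hZ) hZ hy hyZ

end SchurRing

theorem stmt6_general {G G' : Type*} [Group G] [Fintype G] [DecidableEq G]
    [Group G'] [Fintype G'] [DecidableEq G']
    (A B : SchurRing G) (B' : SchurRing G')
    (φ : Finset G → Finset G')
    (ξ : MonoidAlgebra ℤ G) (ξ' : MonoidAlgebra ℤ G')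
    -- `B` is the smallest S-ring over `G` containing `A` and `ξ`:
    (hB : A.le B ∧ ξ ∈ B.carrier ∧
      ∀ C : SchurRing G, A.le C → ξ ∈ C.carrier → B.le C)
    (ψ₁ ψ₂ : Finset G → Finset G')
    (h₁ : IsAlgIso B B' ψ₁ ∧
      (∀ X ∈ A.parts, grpInd (φ X) = ∑ Z ∈ B.parts.filter (· ⊆ X), grpInd (ψ₁ Z)) ∧
      (∀ Z ∈ B.parts, ∀ z ∈ Z, ∀ z' ∈ ψ₁ Z, ξ.coeff z = ξ'.coeff z'))
    (h₂ : IsAlgIso B B' ψ₂ ∧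
      (∀ X ∈ A.parts, grpInd (φ X) = ∑ Z ∈ B.parts.filter (· ⊆ X), grpInd (ψ₂ Z)) ∧
      (∀ Z ∈ B.parts, ∀ z ∈ Z, ∀ z' ∈ ψ₂ Z, ξ.coeff z = ξ'.coeff z')) :
    ∀ Z ∈ B.parts, ψ₁ Z = ψ₂ Z := by
  obtain ⟨hAB, hξB, hBmin⟩ := hB
  obtain ⟨hψ₁, hext₁, hξ₁⟩ := h₁
  obtain ⟨hψ₂, hext₂, hξ₂⟩ := h₂
  obtain ⟨τ, hτ, hsupp, hcomp⟩ := hψ₁.exists_perm_comp_eq hψ₂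
  have hA : A.le (B.fusion τ hτ hsupp) := fun X hX =>
    B.mem_fusion_carrier hτ hsupp (hAB X hX) fun V hV x hx y hy => by
      rw [coeff_grpInd, coeff_grpInd]
      refine if_congr ?_ rfl rfl
      rw [B.mem_iff_subset_of_grpInd_mem (hAB X hX) hV hx,
        B.mem_iff_subset_of_grpInd_mem (hAB X hX) (hτ.mem_parts hV) hy]
      exact hψ₁.subset_iff_subset_of_sum_eq hψ₂ ((hext₁ X hX).symm.trans (hext₂ X hX)) hV
        (hτ.mem_parts hV) (hcomp V hV)
  have hξ : ξ ∈ (B.fusion τ hτ hsupp).carrier :=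
    B.mem_fusion_carrier hτ hsupp hξB fun V hV x hx y hy => by
      obtain ⟨z', hz'⟩ := B'.nonempty_mem _ (hψ₁.mem_parts hV)
      rw [hξ₁ V hV x hx z' hz', hξ₂ (τ V) (hτ.mem_parts hV) y hy z' (hcomp V hV ▸ hz')]
  intro Z hZ
  rw [← hcomp Z hZ,
    SchurRing.apply_eq_self_of_grpInd_mem_fusion hτ hsupp hZ (hBmin _ hA hξ Z hZ)]

/-- given an algebraic isomorphism `φ : A → A'` and elements `ξ ∈ ℤG`,
`ξ' ∈ ℤG'`, there is at most one algebraic isomorphism between the S-rings generated by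
`A, ξ` and by `A', ξ'` extending `φ` and sending `ξ` to `ξ'`.
Here `ψ` extends `φ` means the `ℤ`-linear extension of `ψ` agrees with `φ` on the
indicators of basic sets of `A` (each a union of basic sets of `B`), and `ξ^ψ = ξ'`
is expressed via the coefficients of `ξ, ξ'` (constant on basic sets of `B`, `B'`). -/
theorem stmt6 {G G' : Type*} [Group G] [Fintype G] [DecidableEq G]
    [Group G'] [Fintype G'] [DecidableEq G']
    (A B : SchurRing G) (A' B' : SchurRing G')
    (φ : Finset G → Finset G') (hφ : IsAlgIso A A' φ)
    (ξ : MonoidAlgebra ℤ G) (ξ' : MonoidAlgebra ℤ G')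
    -- `B` is the smallest S-ring over `G` containing `A` and `ξ`:
    (hB : A.le B ∧ ξ ∈ B.carrier ∧
      ∀ C : SchurRing G, A.le C → ξ ∈ C.carrier → B.le C)
    -- `B'` is the smallest S-ring over `G'` containing `A'` and `ξ'`:
    (hB' : A'.le B' ∧ ξ' ∈ B'.carrier ∧
      ∀ C : SchurRing G', A'.le C → ξ' ∈ C.carrier → B'.le C)
    (ψ₁ ψ₂ : Finset G → Finset G')
    (h₁ : IsAlgIso B B' ψ₁ ∧
      (∀ X ∈ A.parts, grpInd (φ X) = ∑ Z ∈ B.parts.filter (· ⊆ X), grpInd (ψ₁ Z)) ∧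
      (∀ Z ∈ B.parts, ∀ z ∈ Z, ∀ z' ∈ ψ₁ Z, ξ.coeff z = ξ'.coeff z'))
    (h₂ : IsAlgIso B B' ψ₂ ∧
      (∀ X ∈ A.parts, grpInd (φ X) = ∑ Z ∈ B.parts.filter (· ⊆ X), grpInd (ψ₂ Z)) ∧
      (∀ Z ∈ B.parts, ∀ z ∈ Z, ∀ z' ∈ ψ₂ Z, ξ.coeff z = ξ'.coeff z')) :
    ∀ Z ∈ B.parts, ψ₁ Z = ψ₂ Z :=
  stmt6_general A B B' φ ξ ξ' hB ψ₁ ψ₂ h₁ h₂
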